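/- arXiv:2107.06864 — 2 statements merged into one kernel-verified Lean document; each statement's English description precedes it below -/
import Mathlib

section
/- For every p ∈ ℕ₀ and every n ∈ ℕ, one has H_n(−p, 3) = H_n(−p)·H_n(3) − B_p·H_n(2) − (p/2)·B_{p−1}·H_n − C^{(p)}_2(n), where the term (p/2)·B_{p−1} is understood to be 0 when p = 0. -/
open Finset



/-- Extended multiple harmonic sum `H_n(k_1,…,k_r) = ∑_{n ≥ n_1 > ⋯ > n_r ≥ 1} 1/(n_1^{k_1} ⋯ n_r^{k_r})`,
with `H_n(∅) = 1`; the exponents may be arbitrary integers.  In particular `Hs n [-(p:ℤ)] = ∑_{m=1}^n m^p`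
and `Hs n [1]` is the `n`-th harmonic number. -/
def Hs : ℕ → List ℤ → ℚ
  | _, [] => 1
  | n, k :: ks => ∑ m ∈ Finset.Icc 1 n, ((m : ℚ) ^ k)⁻¹ * Hs (m - 1) ks

/-- The polynomial `C^{(p)}_{a_2,…,a_r}(x)`, where the list `a = [a_1, a_2, …, a_r]` is the *full*
subscript list including the leading `a_1 = 0` (so `Cpoly p [0]` is `C^{(p)}`, `Cpoly p [0,0]`
is `C^{(p)}_0`, `Cpoly p [0,1,2]` is `C^{(p)}_{1,2}`, …):
`C^{(p)}_{a_2,…,a_r}(x) = ∑_{j_1,…,j_r ≥ 0, j_1+⋯+j_r ≤ p-a_r}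
  (∏_{i=1}^r binom(p+1-a_i-j_1-⋯-j_{i-1}, j_i) B_{j_i} / (p+1-a_i-j_1-⋯-j_{i-1}))
    x^{p+1-a_r-j_1-⋯-j_r}`,
the zero polynomial if `p < a_r`, with `B_j = bernoulli' j`. -/
noncomputable def Cpoly (p : ℕ) (a : List ℕ) : Polynomial ℚ :=
  ∑ j ∈ Fintype.piFinset (fun _ : Fin a.length => Finset.range (p + 1)),
    if (∑ i, j i) + a.getLastD 0 ≤ p then
      Polynomial.C (∏ i : Fin a.length,
        ((p + 1 - a.get i - ∑ i' ∈ Finset.Iio i, j i').choose (j i) : ℚ) * bernoulli' (j i) /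
          ((p + 1 - a.get i - ∑ i' ∈ Finset.Iio i, j i' : ℕ) : ℚ)) *
        Polynomial.X ^ (p + 1 - a.getLastD 0 - ∑ i, j i)
    else 0

private lemma Hs_nil (n : ℕ) : Hs n [] = 1 := rfl

private lemma Hs_cons (n : ℕ) (k : ℤ) (ks : List ℤ) :
    Hs n (k :: ks) = ∑ m ∈ Finset.Icc 1 n, ((m : ℚ) ^ k)⁻¹ * Hs (m - 1) ks := rfl

private lemma Hs_single (n : ℕ) (k : ℤ) : Hs n [k] = ∑ m ∈ Icc 1 n, ((m : ℚ) ^ k)⁻¹ := by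
  rw [Hs_cons]; exact sum_congr rfl fun m _ => by rw [Hs_nil, mul_one]

private lemma Hs_negp (p n : ℕ) : Hs n [-(p : ℤ)] = ∑ m ∈ Icc 1 n, (m : ℚ) ^ p := by
  rw [Hs_single]
  exact sum_congr rfl fun m _ => by rw [zpow_neg, inv_inv, zpow_natCast]

private lemma faul (p n : ℕ) : (∑ k ∈ Icc 1 n, (k : ℚ) ^ p)
    = ∑ i ∈ range (p + 1),
        bernoulli' i * ((p + 1).choose i) * (n : ℚ) ^ (p + 1 - i) / (p + 1) := by
  rw [← Finset.Ico_add_one_right_eq_Icc, sum_Ico_pow]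

private lemma Icc_one_eq_Ioc (m : ℕ) : Icc 1 m = Ioc 0 m := by
  rw [← Finset.Icc_add_one_left_eq_Ioc]; rfl

private lemma pisum {M : Type*} [AddCommMonoid M] (s : Finset ℕ) (f : (Fin 2 → ℕ) → M) :
    ∑ j ∈ Fintype.piFinset (fun _ : Fin 2 => s), f j = ∑ a ∈ s, ∑ b ∈ s, f ![a, b] := by
  rw [← Finset.sum_product']
  refine Finset.sum_bij' (fun j _ => (j 0, j 1)) (fun ab _ => ![ab.1, ab.2]) ?_ ?_ ?_ ?_ ?_
  · intro j hj
    simp only [Fintype.mem_piFinset] at hj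
    simp [Finset.mem_product, hj 0, hj 1]
  · intro ab hab
    simp only [Finset.mem_product] at hab
    simp [Fintype.mem_piFinset, Fin.forall_fin_two, hab.1, hab.2]
  · intro j hj; ext i; fin_cases i <;> rfl
  · intro ab hab; rfl
  · intro j hj; congr 1; ext i; fin_cases i <;> rfl

private lemma Cpoly02 (p : ℕ) :
    Cpoly p [0, 2] = ∑ a ∈ range (p + 1), ∑ b ∈ range (p + 1),
      if a + b + 2 ≤ p then
        Polynomial.C ((((p + 1).choose a : ℚ) * bernoulli' a / ((p + 1 : ℕ) : ℚ)) *
          (((p + 1 - 2 - a).choose b : ℚ) * bernoulli' b / ((p + 1 - 2 - a : ℕ) : ℚ))) *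
          Polynomial.X ^ (p + 1 - 2 - (a + b))
      else 0 := by
  rw [Cpoly]
  erw [pisum]
  refine sum_congr rfl fun a _ => sum_congr rfl fun b _ => ?_
  have h0 : Finset.Iio (0 : Fin 2) = ∅ := by decide
  have h1 : Finset.Iio (1 : Fin 2) = {0} := by decide
  simp [Fin.sum_univ_two, Fin.prod_univ_two, h0, h1]
  split_ifs with h
  · rw [← Polynomial.C_mul]
    congr 1
    exact congrArg _ (mul_div_mul_comm _ _ _ _)
  · rfl

private lemma sum_ite_range {P q : ℕ} (C : ℕ → Prop) [DecidablePred C]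
    (hq : q ≤ P) (hC : ∀ b, C b ↔ b ≤ q) (g : ℕ → ℚ) :
    (∑ b ∈ range (P + 1), if C b then g b else 0) = ∑ b ∈ range (q + 1), g b := by
  rw [← Finset.sum_filter]
  congr 1
  ext b
  simp only [Finset.mem_filter, Finset.mem_range, Nat.lt_succ_iff, hC]
  omega

private lemma Cpoly02_eval (p n : ℕ) :
    (Cpoly p [0, 2]).eval (n : ℚ) = ∑ a ∈ range (p + 1),
      if a + 2 ≤ p then
        (((p + 1).choose a : ℚ) * bernoulli' a / ((p + 1 : ℕ) : ℚ)) *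
          (∑ k ∈ Icc 1 n, (k : ℚ) ^ (p - 2 - a))
      else 0 := by
  rw [Cpoly02]
  rw [Polynomial.eval_finset_sum]
  refine sum_congr rfl fun a _ => ?_
  rw [Polynomial.eval_finset_sum]
  by_cases ha : a + 2 ≤ p
  · rw [if_pos ha]
    set q := p - 2 - a with hq
    have hq1 : p + 1 - 2 - a = q + 1 := by omega
    have : (∑ b ∈ range (p + 1),
        Polynomial.eval (n : ℚ) (if a + b + 2 ≤ p then
          Polynomial.C ((((p + 1).choose a : ℚ) * bernoulli' a / ((p + 1 : ℕ) : ℚ)) *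
            (((p + 1 - 2 - a).choose b : ℚ) * bernoulli' b / ((p + 1 - 2 - a : ℕ) : ℚ))) *
            Polynomial.X ^ (p + 1 - 2 - (a + b))
        else 0)) =
        ∑ b ∈ range (p + 1), (if a + b + 2 ≤ p then
          (((p + 1).choose a : ℚ) * bernoulli' a / ((p + 1 : ℕ) : ℚ)) *
            (((q + 1).choose b : ℚ) * bernoulli' b / ((q + 1 : ℕ) : ℚ)) * (n : ℚ) ^ (q + 1 - b)
        else 0) := by
      refine sum_congr rfl fun b _ => ?_
      split_ifs with hb
      · have he : p + 1 - 2 - (a + b) = q + 1 - b := by omega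
        rw [hq1, he]
        simp
      · simp
    rw [this, sum_ite_range (P := p) (q := q) (fun b => a + b + 2 ≤ p) (by omega) (fun b => by omega)]
    rw [faul q n, Finset.mul_sum]
    refine sum_congr rfl fun b _ => ?_
    push_cast
    ring
  · rw [if_neg ha]
    refine Finset.sum_eq_zero fun b _ => ?_
    rw [if_neg (by omega)]
    simp

private lemma keysum (p m : ℕ) (hm : 1 ≤ m) :
    (∑ a ∈ range (p + 1), if a + 2 ≤ p then
        (((p + 1).choose a : ℚ) * bernoulli' a / ((p + 1 : ℕ) : ℚ)) * (m : ℚ) ^ (p - 2 - a)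
      else 0)
    = ((∑ k ∈ Icc 1 m, (k : ℚ) ^ p) - bernoulli' p * m
        - (p : ℚ) / 2 * bernoulli' (p - 1) * (m : ℚ) ^ 2) / (m : ℚ) ^ 3 := by
  have hm0 : (m : ℚ) ≠ 0 := by positivity
  rw [eq_div_iff (by positivity), Finset.sum_mul, faul p m]
  match p with
  | 0 => norm_num
  | 1 =>
    norm_num [Finset.sum_range_succ, bernoulli'_one]
    ring
  | (p' + 2) =>
    have hL : (∑ a ∈ range (p' + 2 + 1), (if a + 2 ≤ p' + 2 then
        (((p' + 2 + 1).choose a : ℚ) * bernoulli' a / ((p' + 2 + 1 : ℕ) : ℚ)) *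
          (m : ℚ) ^ (p' + 2 - 2 - a) else 0) * (m : ℚ) ^ 3)
        = ∑ a ∈ range (p' + 1),
          (((p' + 2 + 1).choose a : ℚ) * bernoulli' a / ((p' + 2 + 1 : ℕ) : ℚ)) *
            (m : ℚ) ^ (p' + 2 + 1 - a) := by
      simp only [ite_mul, zero_mul]
      rw [sum_ite_range (P := p' + 2) (q := p') _ (by omega) (fun a => by omega)]
      refine sum_congr rfl fun a haa => ?_
      rw [mem_range, Nat.lt_succ_iff] at haa
      have h1 : p' + 2 - 2 - a = p' - a := by omega
      rw [h1, mul_assoc, ← pow_add, show p' - a + 3 = p' + 2 + 1 - a by omega]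
    rw [hL]
    conv_rhs => rw [Finset.sum_range_succ, Finset.sum_range_succ]
    rw [show p' + 2 + 1 - (p' + 2) = 1 by omega, show p' + 2 + 1 - (p' + 1) = 2 by omega]
    push_cast
    have hne : ((p' : ℚ) + 2 + 1) ≠ 0 := by positivity
    have hc1 : (((p' + 2 + 1).choose (p' + 2) : ℕ) : ℚ) = (p' : ℚ) + 3 := by
      rw [Nat.choose_succ_self_right]
      push_cast
      ring
    have hc2 : (((p' + 2 + 1).choose (p' + 1) : ℕ) : ℚ)
        = ((p' : ℚ) + 3) * ((p' : ℚ) + 2) / 2 := by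
      have h : (p' + 2 + 1).choose (p' + 1) = (p' + 2 + 1).choose 2 := by
        rw [← Nat.choose_symm (by omega : p' + 1 ≤ p' + 2 + 1)]
        congr 1
        omega
      rw [h, Nat.cast_choose_two]
      push_cast
      ring
    rw [hc1, hc2]
    have hs : ∑ x ∈ Finset.range (p' + 1),
          ((p' + 2 + 1).choose x : ℚ) * bernoulli' x / ((p' : ℚ) + 2 + 1) * (m : ℚ) ^ (p' + 2 + 1 - x)
        = ∑ x ∈ Finset.range (p' + 1),
          bernoulli' x * ((p' + 2 + 1).choose x : ℚ) * (m : ℚ) ^ (p' + 2 + 1 - x) / ((p' : ℚ) + 2 + 1) :=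
      sum_congr rfl fun x _ => by ring
    have key2 : bernoulli' (p' + 1) * (((p' : ℚ) + 3) * ((p' : ℚ) + 2) / 2) * (m : ℚ) ^ 2 / ((p' : ℚ) + 2 + 1)
        = ((p' : ℚ) + 2) / 2 * bernoulli' (p' + 1) * (m : ℚ) ^ 2 := by
      field_simp
      ring
    have key3 : bernoulli' (p' + 2) * ((p' : ℚ) + 3) * (m : ℚ) ^ 1 / ((p' : ℚ) + 2 + 1)
        = bernoulli' (p' + 2) * (m : ℚ) := by
      field_simp
      ring
    linear_combination hs - key2 - key3

private lemma Icc_succ_Ioc (k n : ℕ) : Icc (k + 1) n = Ioc k n := by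
  ext x; simp only [mem_Icc, mem_Ioc]; omega

private lemma Icc_one_Ioc (n : ℕ) : Icc 1 n = Ioc 0 n := by
  ext x; simp only [mem_Icc, mem_Ioc]; omega

private lemma Cpoly02_final (p n : ℕ) :
    (Cpoly p [0, 2]).eval (n : ℚ)
      = (∑ k ∈ Icc 1 n, ((k : ℚ) ^ (3 : ℤ))⁻¹ * (∑ j ∈ Icc 1 k, (j : ℚ) ^ p))
        - bernoulli' p * Hs n [2] - (p : ℚ) / 2 * bernoulli' (p - 1) * Hs n [1] := by
  rw [Cpoly02_eval]
  have h1 : ∀ a ∈ range (p + 1), (if a + 2 ≤ p then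
      (((p + 1).choose a : ℚ) * bernoulli' a / ((p + 1 : ℕ) : ℚ)) *
        (∑ k ∈ Icc 1 n, (k : ℚ) ^ (p - 2 - a)) else 0)
      = ∑ k ∈ Icc 1 n, (if a + 2 ≤ p then
          (((p + 1).choose a : ℚ) * bernoulli' a / ((p + 1 : ℕ) : ℚ)) * (k : ℚ) ^ (p - 2 - a)
        else 0) := by
    intro a _
    split_ifs with h
    · rw [Finset.mul_sum]
    · rw [Finset.sum_const_zero]
  rw [sum_congr rfl h1, Finset.sum_comm]
  have h2 : ∀ k ∈ Icc 1 n, (∑ a ∈ range (p + 1), if a + 2 ≤ p then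
      (((p + 1).choose a : ℚ) * bernoulli' a / ((p + 1 : ℕ) : ℚ)) * (k : ℚ) ^ (p - 2 - a)
      else 0)
      = ((∑ j ∈ Icc 1 k, (j : ℚ) ^ p) - bernoulli' p * k
          - (p : ℚ) / 2 * bernoulli' (p - 1) * (k : ℚ) ^ 2) / (k : ℚ) ^ 3 := by
    intro k hk
    rw [mem_Icc] at hk
    exact keysum p k hk.1
  rw [sum_congr rfl h2, Hs_single, Hs_single]
  rw [Finset.mul_sum, Finset.mul_sum, ← Finset.sum_sub_distrib, ← Finset.sum_sub_distrib]
  refine sum_congr rfl fun k hk => ?_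
  rw [mem_Icc] at hk
  have hk0 : (k : ℚ) ≠ 0 := by
    have : 0 < k := hk.1
    positivity
  have h3 : ((k : ℚ) ^ (3 : ℤ))⁻¹ = ((k : ℚ) ^ (3 : ℕ))⁻¹ := by norm_cast
  have h2' : ((k : ℚ) ^ (2 : ℤ))⁻¹ = ((k : ℚ) ^ (2 : ℕ))⁻¹ := by norm_cast
  have h1' : ((k : ℚ) ^ (1 : ℤ))⁻¹ = (k : ℚ)⁻¹ := by norm_num
  rw [h3, h2', h1']
  field_simp

private lemma Hs_swap (p n : ℕ) :
    Hs n [-(p : ℤ), 3] = ∑ k ∈ Icc 1 n, ((k : ℚ) ^ (3 : ℤ))⁻¹ *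
      ((∑ j ∈ Icc 1 n, (j : ℚ) ^ p) - ∑ j ∈ Icc 1 k, (j : ℚ) ^ p) := by
  rw [Hs_cons]
  have step1 : ∀ m ∈ Icc 1 n, ((m : ℚ) ^ (-(p : ℤ)))⁻¹ * Hs (m - 1) [3]
      = ∑ k ∈ Icc 1 (m - 1), (m : ℚ) ^ p * ((k : ℚ) ^ (3 : ℤ))⁻¹ := by
    intro m _
    rw [Hs_single, Finset.mul_sum, zpow_neg, inv_inv, zpow_natCast]
  rw [sum_congr rfl step1]
  rw [Finset.sum_comm' (t' := Icc 1 n) (s' := fun k => Icc (k + 1) n)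
    (fun m k => by simp only [mem_Icc]; omega)]
  refine sum_congr rfl fun k hk => ?_
  rw [mem_Icc] at hk
  have hAk : ∑ m ∈ Icc (k + 1) n, (m : ℚ) ^ p
      = (∑ j ∈ Icc 1 n, (j : ℚ) ^ p) - ∑ j ∈ Icc 1 k, (j : ℚ) ^ p := by
    have h := Finset.sum_Ioc_consecutive (fun m : ℕ => (m : ℚ) ^ p) (Nat.zero_le k) hk.2
    rw [Icc_succ_Ioc, Icc_one_Ioc, Icc_one_Ioc]
    linarith [h]
  rw [← Finset.sum_mul, hAk, mul_comm]


/-- `H_n(−p,3) = H_n(−p)·H_n(3) − B_p·H_n(2) − (p/2)·B_{p−1}·H_n − C^{(p)}_2(n)`;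
the factor `(p/2)·B_{p−1}` is `0` when `p = 0` because of the factor `p`. -/
theorem stmt_11 (p : ℕ) (n : ℕ) (hn : 0 < n) :
    Hs n [-(p : ℤ), 3] =
      Hs n [-(p : ℤ)] * Hs n [3] - bernoulli' p * Hs n [2]
        - (p : ℚ) / 2 * bernoulli' (p - 1) * Hs n [1] - (Cpoly p [0, 2]).eval (n : ℚ) := by
  rw [Hs_swap, Cpoly02_final, Hs_negp, Hs_single n 3]
  simp only [mul_sub]
  rw [Finset.sum_sub_distrib]
  have : (∑ k ∈ Icc 1 n, ((k : ℚ) ^ (3 : ℤ))⁻¹ * (∑ j ∈ Icc 1 n, (j : ℚ) ^ p))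
      = (∑ j ∈ Icc 1 n, (j : ℚ) ^ p) * (∑ k ∈ Icc 1 n, ((k : ℚ) ^ (3 : ℤ))⁻¹) := by
    rw [← Finset.sum_mul, mul_comm]
  rw [this]
  ring
end

section
/- For every p ∈ ℕ₀ and every n ∈ ℕ, one has Σ_{m=1}^{n} m^p·H_{m−1}^3 = H_n(−p)·H_n^3 − 3·(C^{(p)}_0(n) + B_p/2)·H_n^2 + (B_p/2)·H_n(2) + (6·C^{(p)}_{0,0}(n) + 3·D^{(p)}(B) − 3·C^{(p)}_1(n) − (p/2)·B_{p−1})·H_n − 6·C^{(p)}_{0,0,0}(n) + 3·C^{(p)}_{0,1}(n) + 3·C^{(p)}_{1,1}(n) − C^{(p)}_2(n), where the term (p/2)·B_{p−1} is understood to be 0 when p = 0. -/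
/-- Umbral evaluation `Q(B)` of a polynomial `Q(x) = ∑_m q_m x^m`: replace `x^m` by the
Bernoulli number `B_m = bernoulli' m` (the convention with `B_1 = +1/2`). -/
noncomputable def umbralB (Q : Polynomial ℚ) : ℚ := Q.sum fun m c => c * bernoulli' m

open Finset Polynomial
noncomputable def co (m j : ℕ) : ℚ := (m.choose j : ℚ) * bernoulli' j / m

noncomputable def Cgen (p r : ℕ) (a : List ℕ) : Polynomial ℚ :=
  ∑ g ∈ Fintype.piFinset (fun _ : Fin r => Finset.range (p + 1)),
    if (∑ i, g i) + a.getLastD 0 ≤ p then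
      Polynomial.C (∏ i : Fin r, co (p + 1 - a.getD i 0 - ∑ i' ∈ Finset.Iio i, g i') (g i)) *
        Polynomial.X ^ (p + 1 - a.getLastD 0 - ∑ i, g i)
    else 0

lemma cpoly_eq_cgen (p : ℕ) (a : List ℕ) : Cpoly p a = Cgen p a.length a := by
  unfold Cpoly Cgen co
  refine Finset.sum_congr rfl fun g _ => ?_
  have h : ∀ i : Fin a.length, a.get i = a.getD i 0 := by
    intro i
    rw [List.get_eq_getElem, List.getD_eq_getElem _ _ i.isLt]
  simp_rw [h]

lemma piSplit {M : Type*} [AddCommMonoid M] {r : ℕ} (s : Finset ℕ) (f : (Fin (r+1) → ℕ) → M) :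
    ∑ g ∈ Fintype.piFinset (fun _ : Fin (r+1) => s), f g
      = ∑ j ∈ s, ∑ g ∈ Fintype.piFinset (fun _ : Fin r => s), f (Matrix.vecCons j g) := by
  rw [← Finset.sum_product']
  refine Finset.sum_nbij' (i := fun (g : Fin (r+1) → ℕ) => ((g 0, Fin.tail g) : ℕ × (Fin r → ℕ)))
    (j := fun (x : ℕ × (Fin r → ℕ)) => Matrix.vecCons x.1 x.2) ?_ ?_ ?_ ?_ ?_
  · intro g hg
    simp only [Fintype.mem_piFinset] at hg ⊢
    exact Finset.mk_mem_product (hg 0) (by simp [Fintype.mem_piFinset, Fin.tail, hg])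
  · intro x hx
    simp only [Finset.mem_product, Fintype.mem_piFinset] at hx ⊢
    intro i
    refine Fin.cases ?_ ?_ i
    · simpa using hx.1
    · intro i'; simpa [Matrix.vecCons] using hx.2 i'
  · intro g _; exact Fin.cons_self_tail g
  · intro x _; simp [Matrix.vecCons]
  · intro g _; rw [show Matrix.vecCons (g 0) (Fin.tail g) = g from Fin.cons_self_tail g]

lemma piZero {M : Type*} [AddCommMonoid M] (s : Finset ℕ) (f : (Fin 0 → ℕ) → M) :
    ∑ g ∈ Fintype.piFinset (fun _ : Fin 0 => s), f g = f ![] := by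
  rw [Fintype.piFinset_of_isEmpty]
  exact Fintype.sum_unique f

lemma iio10 : Finset.Iio (0 : Fin 1) = ∅ := by decide
lemma iio20 : Finset.Iio (0 : Fin 2) = ∅ := by decide
lemma iio21 : Finset.Iio (1 : Fin 2) = {0} := by decide
lemma iio30 : Finset.Iio (0 : Fin 3) = ∅ := by decide
lemma iio31 : Finset.Iio (1 : Fin 3) = {0} := by decide
lemma iio32 : Finset.Iio (2 : Fin 3) = {0, 1} := by decide
lemma iio40 : Finset.Iio (0 : Fin 4) = ∅ := by decide
lemma iio41 : Finset.Iio (1 : Fin 4) = {0} := by decide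
lemma iio42 : Finset.Iio (2 : Fin 4) = {0, 1} := by decide
lemma iio43 : Finset.Iio (3 : Fin 4) = {0, 1, 2} := by decide

lemma L1 (p : ℕ) : Cpoly p [0]
    = ∑ j ∈ range (p+1), Polynomial.C (co (p+1) j) * Polynomial.X ^ (p+1-j) := by
  rw [cpoly_eq_cgen]
  show Cgen p 1 [0] = _
  unfold Cgen
  refine Eq.trans (piSplit (r := 0) _ _) ?_
  refine Finset.sum_congr rfl fun j hj => ?_
  rw [piZero]
  rw [mem_range] at hj
  simp only [Fin.sum_univ_one, Fin.prod_univ_one, Matrix.cons_val_zero, iio10,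
    Finset.sum_empty, Fin.val_zero, List.getD_cons_zero, List.getLastD_cons,
    List.getLastD_nil, Nat.sub_zero, Nat.add_zero]
  rw [if_pos (by omega)]

lemma sumpair3 (g : Fin 3 → ℕ) : ∑ i' ∈ ({0,1} : Finset (Fin 3)), g i' = g 0 + g 1 := by
  rw [Finset.sum_pair (by decide)]

lemma sumpair4 (g : Fin 4 → ℕ) : ∑ i' ∈ ({0,1} : Finset (Fin 4)), g i' = g 0 + g 1 := by
  rw [Finset.sum_pair (by decide)]

lemma sumtriple4 (g : Fin 4 → ℕ) : ∑ i' ∈ ({0,1,2} : Finset (Fin 4)), g i' = g 0 + g 1 + g 2 := by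
  rw [Finset.sum_insert (by decide), Finset.sum_pair (by decide)]; ring

lemma L2 (p b : ℕ) : Cpoly p [0, b]
    = ∑ j1 ∈ range (p+1), ∑ j2 ∈ range (p+1),
        if j1 + j2 + b ≤ p then
          Polynomial.C (co (p+1) j1 * co (p+1-b-j1) j2) * Polynomial.X ^ (p+1-b-(j1+j2))
        else 0 := by
  rw [cpoly_eq_cgen]
  show Cgen p 2 [0, b] = _
  unfold Cgen
  refine Eq.trans (piSplit (r := 1) _ _) ?_
  refine Finset.sum_congr rfl fun j1 _ => ?_
  refine Eq.trans (piSplit (r := 0) _ _) ?_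
  refine Finset.sum_congr rfl fun j2 _ => ?_
  rw [piZero]
  simp only [Fin.sum_univ_two, Fin.prod_univ_two, Matrix.cons_val_zero, Matrix.cons_val_one,
    Matrix.head_cons, iio20, iio21, Finset.sum_empty, Finset.sum_singleton,
    Fin.val_zero, Fin.val_one, List.getD_cons_zero, List.getD_cons_succ,
    List.getLastD_cons, List.getLastD_nil, Nat.sub_zero]

lemma L3 (p b c : ℕ) : Cpoly p [0, b, c]
    = ∑ j1 ∈ range (p+1), ∑ j2 ∈ range (p+1), ∑ j3 ∈ range (p+1),
        if j1 + j2 + j3 + c ≤ p then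
          Polynomial.C (co (p+1) j1 * co (p+1-b-j1) j2 * co (p+1-c-(j1+j2)) j3) *
            Polynomial.X ^ (p+1-c-(j1+j2+j3))
        else 0 := by
  rw [cpoly_eq_cgen]
  show Cgen p 3 [0, b, c] = _
  unfold Cgen
  refine Eq.trans (piSplit (r := 2) _ _) ?_
  refine Finset.sum_congr rfl fun j1 _ => ?_
  refine Eq.trans (piSplit (r := 1) _ _) ?_
  refine Finset.sum_congr rfl fun j2 _ => ?_
  refine Eq.trans (piSplit (r := 0) _ _) ?_
  refine Finset.sum_congr rfl fun j3 _ => ?_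
  rw [piZero]
  simp only [Fin.sum_univ_three, Fin.prod_univ_three, Matrix.cons_val_zero, Matrix.cons_val_one,
    Matrix.head_cons, Matrix.cons_val_two, Matrix.tail_cons, iio30, iio31, iio32, sumpair3,
    Finset.sum_empty, Finset.sum_singleton, Fin.val_zero, Fin.val_one, Fin.val_two,
    List.getD_cons_zero, List.getD_cons_succ, List.getLastD_cons, List.getLastD_nil, Nat.sub_zero]

lemma L4 (p : ℕ) : Cpoly p [0, 0, 0, 0]
    = ∑ j1 ∈ range (p+1), ∑ j2 ∈ range (p+1), ∑ j3 ∈ range (p+1), ∑ j4 ∈ range (p+1),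
        if j1 + j2 + j3 + j4 ≤ p then
          Polynomial.C (co (p+1) j1 * co (p+1-j1) j2 * co (p+1-(j1+j2)) j3 *
            co (p+1-(j1+j2+j3)) j4) * Polynomial.X ^ (p+1-(j1+j2+j3+j4))
        else 0 := by
  rw [cpoly_eq_cgen]
  show Cgen p 4 [0, 0, 0, 0] = _
  unfold Cgen
  refine Eq.trans (piSplit (r := 3) _ _) ?_
  refine Finset.sum_congr rfl fun j1 _ => ?_
  refine Eq.trans (piSplit (r := 2) _ _) ?_
  refine Finset.sum_congr rfl fun j2 _ => ?_
  refine Eq.trans (piSplit (r := 1) _ _) ?_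
  refine Finset.sum_congr rfl fun j3 _ => ?_
  refine Eq.trans (piSplit (r := 0) _ _) ?_
  refine Finset.sum_congr rfl fun j4 _ => ?_
  rw [piZero]
  simp only [Fin.sum_univ_four, Fin.prod_univ_four, Matrix.cons_val_zero, Matrix.cons_val_one,
    Matrix.head_cons, Matrix.cons_val_two, Matrix.cons_val_three, Matrix.tail_cons,
    iio40, iio41, iio42, iio43, sumpair4, sumtriple4,
    Finset.sum_empty, Finset.sum_singleton, Fin.val_zero, Fin.val_one,
    List.getD_cons_zero, List.getD_cons_succ, List.getLastD_cons, List.getLastD_nil, Nat.sub_zero]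
  rw [show ((2 : Fin 4) : ℕ) = 2 from rfl, show ((3 : Fin 4) : ℕ) = 3 from rfl]
  simp only [List.getD_cons_succ, List.getD_cons_zero, Nat.sub_zero, Nat.add_zero]

noncomputable def pws (q n : ℕ) : ℚ := ∑ m ∈ Finset.Icc 1 n, (m:ℚ)^q

lemma FA (q n : ℕ) : ∑ j ∈ range (q+1), co (q+1) j * (n:ℚ)^(q+1-j) = pws q n := by
  unfold pws
  rw [← Finset.Ico_add_one_right_eq_Icc, _root_.sum_Ico_pow]
  refine Finset.sum_congr rfl fun j _ => ?_
  unfold co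
  push_cast
  ring

lemma FG (p b t : ℕ) (n : ℕ) :
    ∑ j ∈ range (p+1), (if t + j + b ≤ p then co (p+1-b-t) j * (n:ℚ)^(p+1-b-(t+j)) else 0)
      = if t + b ≤ p then pws (p-b-t) n else 0 := by
  by_cases h : t + b ≤ p
  · rw [if_pos h]
    set q := p - b - t with hq
    have h1 : q + 1 ≤ p + 1 := by omega
    rw [← FA q n]
    rw [← Finset.sum_subset (Finset.range_subset_range.2 h1)
      (fun x hx hnx => by rw [mem_range] at hx hnx; rw [if_neg (by omega)])]
    refine Finset.sum_congr rfl fun j hj => ?_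
    rw [mem_range] at hj
    rw [if_pos (by omega)]
    have e1 : p + 1 - b - t = q + 1 := by omega
    have e2 : p + 1 - b - (t + j) = q + 1 - j := by omega
    rw [e1, e2]
  · rw [if_neg h]
    exact Finset.sum_eq_zero fun j _ => if_neg (by omega)

lemma FG0 (p t : ℕ) (n : ℕ) :
    ∑ j ∈ range (p+1), (if t + j ≤ p then co (p+1-t) j * (n:ℚ)^(p+1-(t+j)) else 0)
      = if t ≤ p then pws (p-t) n else 0 := by
  have := FG p 0 t n
  simpa using this

lemma coB (q : ℕ) : co (q+1) q = bernoulli' q := by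
  unfold co
  rw [Nat.choose_succ_self_right]
  rw [mul_comm, mul_div_assoc, div_self (by exact_mod_cast Nat.succ_ne_zero q), mul_one]

lemma co_second (k : ℕ) : co (k+3) (k+1) = ((k:ℚ)+2)/2 * bernoulli' (k+1) := by
  have h0 : (k+3).choose (k+1) = (k+3).choose 2 := by
    have := Nat.choose_symm (show 2 ≤ k+3 by omega)
    simpa using this
  have h2 : (k+3).choose 2 * 2 = (k+3)*(k+2) := by
    have h := Nat.add_one_mul_choose_eq (k+2) 1
    simp only [Nat.choose_one_right, Nat.succ_eq_add_one, show k+2+1 = k+3 from rfl, show 1+1 = 2 from rfl] at h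
    omega
  have hc : (((k+3).choose (k+1) : ℕ) : ℚ) = ((k:ℚ)+3)*((k:ℚ)+2)/2 := by
    rw [h0]
    have : (((k+3).choose 2 * 2 : ℕ) : ℚ) = ((k:ℚ)+3)*((k:ℚ)+2) := by exact_mod_cast congrArg Nat.cast h2
    push_cast at this ⊢
    linarith
  unfold co
  rw [hc]
  have h3 : ((k+3 : ℕ) : ℚ) = (k:ℚ)+3 := by push_cast; ring
  rw [h3]
  field_simp

lemma PE1 (p : ℕ) (x : ℚ) :
    (Cpoly p [0]).eval x = ∑ j ∈ range (p+1), co (p+1) j * x^(p+1-j) := by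
  rw [L1]
  simp [eval_finset_sum]

lemma PE2 (p b : ℕ) (x : ℚ) :
    (Cpoly p [0,b]).eval x = ∑ j1 ∈ range (p+1), ∑ j2 ∈ range (p+1),
      if j1 + j2 + b ≤ p then co (p+1) j1 * co (p+1-b-j1) j2 * x^(p+1-b-(j1+j2)) else 0 := by
  rw [L2]
  simp [eval_finset_sum, apply_ite (Polynomial.eval x)]

lemma PE3 (p b c : ℕ) (x : ℚ) :
    (Cpoly p [0,b,c]).eval x = ∑ j1 ∈ range (p+1), ∑ j2 ∈ range (p+1), ∑ j3 ∈ range (p+1),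
      if j1 + j2 + j3 + c ≤ p then
        co (p+1) j1 * co (p+1-b-j1) j2 * co (p+1-c-(j1+j2)) j3 * x^(p+1-c-(j1+j2+j3))
      else 0 := by
  rw [L3]
  simp [eval_finset_sum, apply_ite (Polynomial.eval x)]

lemma PE4 (p : ℕ) (x : ℚ) :
    (Cpoly p [0,0,0,0]).eval x
      = ∑ j1 ∈ range (p+1), ∑ j2 ∈ range (p+1), ∑ j3 ∈ range (p+1), ∑ j4 ∈ range (p+1),
      if j1 + j2 + j3 + j4 ≤ p then
        co (p+1) j1 * co (p+1-j1) j2 * co (p+1-(j1+j2)) j3 * co (p+1-(j1+j2+j3)) j4 *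
          x^(p+1-(j1+j2+j3+j4))
      else 0 := by
  rw [L4]
  simp [eval_finset_sum, apply_ite (Polynomial.eval x)]

lemma REP1 (p n : ℕ) : (Cpoly p [0]).eval (n:ℚ) = pws p n := by
  rw [PE1, FA]

lemma REP2 (p b n : ℕ) : (Cpoly p [0,b]).eval (n:ℚ)
    = ∑ j1 ∈ range (p+1), co (p+1) j1 * (if j1 + b ≤ p then pws (p-b-j1) n else 0) := by
  rw [PE2]
  refine Finset.sum_congr rfl fun j1 _ => ?_
  rw [← FG p b j1 n, Finset.mul_sum]
  refine Finset.sum_congr rfl fun j2 _ => ?_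
  rw [mul_ite, mul_zero, mul_assoc]

lemma REP3 (p b c n : ℕ) : (Cpoly p [0,b,c]).eval (n:ℚ)
    = ∑ j1 ∈ range (p+1), ∑ j2 ∈ range (p+1), co (p+1) j1 * co (p+1-b-j1) j2 *
        (if (j1+j2) + c ≤ p then pws (p-c-(j1+j2)) n else 0) := by
  rw [PE3]
  refine Finset.sum_congr rfl fun j1 _ => ?_
  refine Finset.sum_congr rfl fun j2 _ => ?_
  rw [← FG p c (j1+j2) n, Finset.mul_sum]
  refine Finset.sum_congr rfl fun j3 _ => ?_
  rw [mul_ite, mul_zero, mul_assoc]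

lemma REP4 (p n : ℕ) : (Cpoly p [0,0,0,0]).eval (n:ℚ)
    = ∑ j1 ∈ range (p+1), ∑ j2 ∈ range (p+1), ∑ j3 ∈ range (p+1),
        co (p+1) j1 * co (p+1-j1) j2 * co (p+1-(j1+j2)) j3 *
        (if (j1+j2+j3) ≤ p then pws (p-(j1+j2+j3)) n else 0) := by
  rw [PE4]
  refine Finset.sum_congr rfl fun j1 _ => ?_
  refine Finset.sum_congr rfl fun j2 _ => ?_
  refine Finset.sum_congr rfl fun j3 _ => ?_
  rw [← FG0 p (j1+j2+j3) n, Finset.mul_sum]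
  refine Finset.sum_congr rfl fun j4 _ => ?_
  rw [mul_ite, mul_zero, mul_assoc]

lemma pws_succ (q n : ℕ) : pws q (n+1) = pws q n + ((n+1:ℕ):ℚ)^q := by
  unfold pws
  rw [← Finset.Ico_add_one_right_eq_Icc, ← Finset.Ico_add_one_right_eq_Icc, Finset.sum_Ico_succ_top (by omega)]

lemma solve_div {A B C N : ℚ} (hN : N ≠ 0) (k : ℕ) (h : (A - B) * N^k = C) :
    A = B + C / N^k := by
  have h2 : C / N^k = A - B := by rw [div_eq_iff (pow_ne_zero k hN)]; linarith
  linarith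

lemma d2 (p n : ℕ) : (Cpoly p [0,0]).eval ((n+1 : ℕ):ℚ)
    = (Cpoly p [0,0]).eval (n:ℚ) + (Cpoly p [0]).eval ((n+1 : ℕ):ℚ) / ((n+1 : ℕ):ℚ) := by
  have hN : ((n+1 : ℕ):ℚ) ≠ 0 := by exact_mod_cast Nat.succ_ne_zero n
  rw [REP2 p 0 (n+1), REP2 p 0 n, PE1]
  have := solve_div (A := ∑ j1 ∈ range (p+1), co (p+1) j1 * (if j1 + 0 ≤ p then pws (p-0-j1) (n+1) else 0))
    (B := ∑ j1 ∈ range (p+1), co (p+1) j1 * (if j1 + 0 ≤ p then pws (p-0-j1) n else 0))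
    (C := ∑ j ∈ range (p+1), co (p+1) j * ((n+1:ℕ):ℚ)^(p+1-j)) hN 1 ?_
  · rw [this, pow_one]
  · rw [pow_one, ← Finset.sum_sub_distrib, Finset.sum_mul]
    refine Finset.sum_congr rfl fun j hj => ?_
    rw [mem_range] at hj
    rw [if_pos (show j + 0 ≤ p by omega), if_pos (show j + 0 ≤ p by omega), pws_succ]
    have e : p - 0 - j + 1 = p + 1 - j := by omega
    rw [← e, pow_succ]
    ring

lemma d3 (p n : ℕ) : (Cpoly p [0,0,0]).eval ((n+1 : ℕ):ℚ)
    = (Cpoly p [0,0,0]).eval (n:ℚ) + (Cpoly p [0,0]).eval ((n+1 : ℕ):ℚ) / ((n+1 : ℕ):ℚ) := by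
  have hN : ((n+1 : ℕ):ℚ) ≠ 0 := by exact_mod_cast Nat.succ_ne_zero n
  rw [REP3 p 0 0 (n+1), REP3 p 0 0 n, PE2 p 0]
  have key : ((∑ j1 ∈ range (p+1), ∑ j2 ∈ range (p+1), co (p+1) j1 * co (p+1-0-j1) j2 *
        (if (j1+j2) + 0 ≤ p then pws (p-0-(j1+j2)) (n+1) else 0))
      - (∑ j1 ∈ range (p+1), ∑ j2 ∈ range (p+1), co (p+1) j1 * co (p+1-0-j1) j2 *
        (if (j1+j2) + 0 ≤ p then pws (p-0-(j1+j2)) n else 0))) * ((n+1:ℕ):ℚ)^1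
      = ∑ j1 ∈ range (p+1), ∑ j2 ∈ range (p+1),
          if j1 + j2 + 0 ≤ p then
            co (p+1) j1 * co (p+1-0-j1) j2 * ((n+1:ℕ):ℚ)^(p+1-0-(j1+j2)) else 0 := by
    rw [pow_one, ← Finset.sum_sub_distrib, Finset.sum_mul]
    refine Finset.sum_congr rfl fun j1 _ => ?_
    rw [← Finset.sum_sub_distrib, Finset.sum_mul]
    refine Finset.sum_congr rfl fun j2 _ => ?_
    by_cases hc : j1 + j2 + 0 ≤ p
    · rw [if_pos hc, if_pos hc, if_pos hc, pws_succ]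
      have e : p - 0 - (j1+j2) + 1 = p + 1 - 0 - (j1+j2) := by omega
      rw [← e, pow_succ]
      ring
    · rw [if_neg hc, if_neg hc, if_neg hc]
      ring
  have := solve_div hN 1 key
  rw [this, pow_one]

lemma d4 (p n : ℕ) : (Cpoly p [0,0,0,0]).eval ((n+1 : ℕ):ℚ)
    = (Cpoly p [0,0,0,0]).eval (n:ℚ) + (Cpoly p [0,0,0]).eval ((n+1 : ℕ):ℚ) / ((n+1 : ℕ):ℚ) := by
  have hN : ((n+1 : ℕ):ℚ) ≠ 0 := by exact_mod_cast Nat.succ_ne_zero n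
  rw [REP4 p (n+1), REP4 p n, PE3 p 0 0]
  simp only [Nat.sub_zero, Nat.add_zero]
  have key : ((∑ j1 ∈ range (p+1), ∑ j2 ∈ range (p+1), ∑ j3 ∈ range (p+1),
        co (p+1) j1 * co (p+1-j1) j2 * co (p+1-(j1+j2)) j3 *
        (if (j1+j2+j3) ≤ p then pws (p-(j1+j2+j3)) (n+1) else 0))
      - (∑ j1 ∈ range (p+1), ∑ j2 ∈ range (p+1), ∑ j3 ∈ range (p+1),
        co (p+1) j1 * co (p+1-j1) j2 * co (p+1-(j1+j2)) j3 *
        (if (j1+j2+j3) ≤ p then pws (p-(j1+j2+j3)) n else 0))) * ((n+1:ℕ):ℚ)^1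
      = ∑ j1 ∈ range (p+1), ∑ j2 ∈ range (p+1), ∑ j3 ∈ range (p+1),
          if j1 + j2 + j3 ≤ p then
            co (p+1) j1 * co (p+1-j1) j2 * co (p+1-(j1+j2)) j3 *
              ((n+1:ℕ):ℚ)^(p+1-(j1+j2+j3)) else 0 := by
    rw [pow_one, ← Finset.sum_sub_distrib, Finset.sum_mul]
    refine Finset.sum_congr rfl fun j1 _ => ?_
    rw [← Finset.sum_sub_distrib, Finset.sum_mul]
    refine Finset.sum_congr rfl fun j2 _ => ?_
    rw [← Finset.sum_sub_distrib, Finset.sum_mul]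
    refine Finset.sum_congr rfl fun j3 _ => ?_
    by_cases hc : j1 + j2 + j3 ≤ p
    · rw [if_pos hc, if_pos hc, if_pos hc, pws_succ]
      have e : p - (j1+j2+j3) + 1 = p + 1 - (j1+j2+j3) := by omega
      rw [← e, pow_succ]
      ring
    · rw [if_neg hc, if_neg hc, if_neg hc]
      ring
  have := solve_div hN 1 key
  rw [this, pow_one]

lemma dQ3b (p n : ℕ) : (Cpoly p [0,1,1]).eval ((n+1 : ℕ):ℚ)
    = (Cpoly p [0,1,1]).eval (n:ℚ) + (Cpoly p [0,1]).eval ((n+1 : ℕ):ℚ) / ((n+1 : ℕ):ℚ) := by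
  have hN : ((n+1 : ℕ):ℚ) ≠ 0 := by exact_mod_cast Nat.succ_ne_zero n
  rw [REP3 p 1 1 (n+1), REP3 p 1 1 n, PE2 p 1]
  have key : ((∑ j1 ∈ range (p+1), ∑ j2 ∈ range (p+1), co (p+1) j1 * co (p+1-1-j1) j2 *
        (if (j1+j2) + 1 ≤ p then pws (p-1-(j1+j2)) (n+1) else 0))
      - (∑ j1 ∈ range (p+1), ∑ j2 ∈ range (p+1), co (p+1) j1 * co (p+1-1-j1) j2 *
        (if (j1+j2) + 1 ≤ p then pws (p-1-(j1+j2)) n else 0))) * ((n+1:ℕ):ℚ)^1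
      = ∑ j1 ∈ range (p+1), ∑ j2 ∈ range (p+1),
          if j1 + j2 + 1 ≤ p then
            co (p+1) j1 * co (p+1-1-j1) j2 * ((n+1:ℕ):ℚ)^(p+1-1-(j1+j2)) else 0 := by
    rw [pow_one, ← Finset.sum_sub_distrib, Finset.sum_mul]
    refine Finset.sum_congr rfl fun j1 _ => ?_
    rw [← Finset.sum_sub_distrib, Finset.sum_mul]
    refine Finset.sum_congr rfl fun j2 _ => ?_
    by_cases hc : j1 + j2 + 1 ≤ p
    · rw [if_pos hc, if_pos hc, if_pos hc, pws_succ]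
      have e : p - 1 - (j1+j2) + 1 = p + 1 - 1 - (j1+j2) := by omega
      rw [← e, pow_succ]
      ring
    · rw [if_neg hc, if_neg hc, if_neg hc]
      ring
  have := solve_div hN 1 key
  rw [this, pow_one]

lemma umbral_add (P Q : Polynomial ℚ) : umbralB (P + Q) = umbralB P + umbralB Q := by
  unfold umbralB
  exact Polynomial.sum_add_index P Q _ (by simp) (by intros; ring)

lemma umbral_sum {s : Finset ℕ} (F : ℕ → Polynomial ℚ) :
    umbralB (∑ j ∈ s, F j) = ∑ j ∈ s, umbralB (F j) :=
  map_sum (AddMonoidHom.mk' umbralB umbral_add) F s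

lemma umbral_mono (e : ℕ) (c : ℚ) :
    umbralB (Polynomial.C c * Polynomial.X ^ e) = c * bernoulli' e := by
  unfold umbralB
  rw [Polynomial.C_mul_X_pow_eq_monomial, Polynomial.sum_monomial_index _ _ (by simp)]

lemma uEq (p : ℕ) : ∑ j ∈ range (p+1), co (p+1) j * bernoulli' (p-j)
    = umbralB (Cpoly p [0]).divX := by
  rw [L1]
  have hdiv : Polynomial.divX (∑ j ∈ range (p+1), Polynomial.C (co (p+1) j) * Polynomial.X ^ (p+1-j))
      = ∑ j ∈ range (p+1), Polynomial.C (co (p+1) j) * Polynomial.X ^ (p-j) := by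
    have : Polynomial.divX (∑ j ∈ range (p+1), Polynomial.C (co (p+1) j) * Polynomial.X ^ (p+1-j))
        = ∑ j ∈ range (p+1), Polynomial.divX (Polynomial.C (co (p+1) j) * Polynomial.X ^ (p+1-j)) := by
      exact map_sum Polynomial.divX_hom _ _
    rw [this]
    refine Finset.sum_congr rfl fun j hj => ?_
    rw [mem_range] at hj
    rw [Polynomial.divX_C_mul_X_pow, if_neg (by omega)]
    have e : p + 1 - j - 1 = p - j := by omega
    rw [e]
  rw [hdiv, umbral_sum]
  exact Finset.sum_congr rfl fun j _ => (umbral_mono _ _).symm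

lemma dQ2 (p n : ℕ) : (Cpoly p [0,1]).eval ((n+1 : ℕ):ℚ)
    = (Cpoly p [0,1]).eval (n:ℚ)
      + ((Cpoly p [0]).eval ((n+1 : ℕ):ℚ) - bernoulli' p * ((n+1 : ℕ):ℚ)) / ((n+1 : ℕ):ℚ)^2 := by
  have hN : ((n+1 : ℕ):ℚ) ≠ 0 := by exact_mod_cast Nat.succ_ne_zero n
  rw [REP2 p 1 (n+1), REP2 p 1 n, PE1]
  refine solve_div hN 2 ?_
  rw [← Finset.sum_sub_distrib, Finset.sum_mul]
  have lhs_eq : ∀ j ∈ range (p+1),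
      (co (p+1) j * (if j + 1 ≤ p then pws (p-1-j) (n+1) else 0)
        - co (p+1) j * (if j + 1 ≤ p then pws (p-1-j) n else 0)) * ((n+1:ℕ):ℚ)^2
      = if j + 1 ≤ p then co (p+1) j * ((n+1:ℕ):ℚ)^(p+1-j) else 0 := by
    intro j _
    by_cases hc : j + 1 ≤ p
    · rw [if_pos hc, if_pos hc, if_pos hc, pws_succ]
      have e : (p - 1 - j) + 2 = p + 1 - j := by omega
      rw [← e, pow_add]
      ring
    · rw [if_neg hc, if_neg hc, if_neg hc]
      ring
  rw [Finset.sum_congr rfl lhs_eq]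
  rw [Finset.sum_range_succ, Finset.sum_range_succ (f := fun j => co (p+1) j * ((n+1:ℕ):ℚ)^(p+1-j))]
  rw [if_neg (by omega), coB, show p + 1 - p = 1 by omega, pow_one]
  have : ∑ j ∈ range p, (if j + 1 ≤ p then co (p+1) j * ((n+1:ℕ):ℚ)^(p+1-j) else 0)
      = ∑ j ∈ range p, co (p+1) j * ((n+1:ℕ):ℚ)^(p+1-j) := by
    refine Finset.sum_congr rfl fun j hj => ?_
    rw [mem_range] at hj
    rw [if_pos (by omega)]
  rw [this]
  ring

lemma dQ3a (p n : ℕ) : (Cpoly p [0,0,1]).eval ((n+1 : ℕ):ℚ)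
    = (Cpoly p [0,0,1]).eval (n:ℚ)
      + ((Cpoly p [0,0]).eval ((n+1 : ℕ):ℚ)
          - umbralB (Cpoly p [0]).divX * ((n+1 : ℕ):ℚ)) / ((n+1 : ℕ):ℚ)^2 := by
  have hN : ((n+1 : ℕ):ℚ) ≠ 0 := by exact_mod_cast Nat.succ_ne_zero n
  rw [REP3 p 0 1 (n+1), REP3 p 0 1 n, PE2 p 0]
  simp only [Nat.sub_zero, Nat.add_zero]
  refine solve_div hN 2 ?_
  rw [← Finset.sum_sub_distrib]
  rw [Finset.sum_mul]
  -- LHS per-term to Δ-form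
  have lhs_eq : ∀ j1 ∈ range (p+1),
      ((∑ j2 ∈ range (p+1), co (p+1) j1 * co (p+1-j1) j2 *
          (if (j1+j2) + 1 ≤ p then pws (p-1-(j1+j2)) (n+1) else 0))
        - ∑ j2 ∈ range (p+1), co (p+1) j1 * co (p+1-j1) j2 *
          (if (j1+j2) + 1 ≤ p then pws (p-1-(j1+j2)) n else 0)) * ((n+1:ℕ):ℚ)^2
      = ∑ j2 ∈ range (p+1),
          (if j1 + j2 + 1 ≤ p then
            co (p+1) j1 * co (p+1-j1) j2 * ((n+1:ℕ):ℚ)^(p+1-(j1+j2)) else 0) := by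
    intro j1 _
    rw [← Finset.sum_sub_distrib, Finset.sum_mul]
    refine Finset.sum_congr rfl fun j2 _ => ?_
    by_cases hc : j1 + j2 + 1 ≤ p
    · rw [if_pos hc, if_pos hc, if_pos hc, pws_succ]
      have e : (p - 1 - (j1+j2)) + 2 = p + 1 - (j1+j2) := by omega
      rw [← e, pow_add]
      ring
    · rw [if_neg hc, if_neg hc, if_neg hc]
      ring
  rw [Finset.sum_congr rfl lhs_eq]
  -- split the P2 sum into Δ-form + diagonal correction
  have split : ∀ j1 ∈ range (p+1), ∀ j2 ∈ range (p+1),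
      (if j1 + j2 ≤ p then
          co (p+1) j1 * co (p+1-j1) j2 * ((n+1:ℕ):ℚ)^(p+1-(j1+j2)) else 0)
      = (if j1 + j2 + 1 ≤ p then
          co (p+1) j1 * co (p+1-j1) j2 * ((n+1:ℕ):ℚ)^(p+1-(j1+j2)) else 0)
        + (if j1 + j2 = p then
          co (p+1) j1 * co (p+1-j1) j2 * ((n+1:ℕ):ℚ)^(p+1-(j1+j2)) else 0) := by
    intro j1 _ j2 _
    split_ifs <;> first | omega | ring
  have corr : ∑ j1 ∈ range (p+1), ∑ j2 ∈ range (p+1),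
      (if j1 + j2 = p then
        co (p+1) j1 * co (p+1-j1) j2 * ((n+1:ℕ):ℚ)^(p+1-(j1+j2)) else 0)
      = umbralB (Cpoly p [0]).divX * ((n+1:ℕ):ℚ) := by
    rw [← uEq, Finset.sum_mul]
    refine Finset.sum_congr rfl fun j1 hj1 => ?_
    rw [mem_range] at hj1
    have conv : ∀ j2 ∈ range (p+1),
        (if j1 + j2 = p then
          co (p+1) j1 * co (p+1-j1) j2 * ((n+1:ℕ):ℚ)^(p+1-(j1+j2)) else 0)
        = (if j2 = p - j1 then
          co (p+1) j1 * co (p+1-j1) j2 * ((n+1:ℕ):ℚ)^(p+1-(j1+j2)) else 0) := by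
      intro j2 _
      exact if_congr (by omega) rfl rfl
    rw [Finset.sum_congr rfl conv, Finset.sum_ite_eq' (range (p+1)) (p - j1)]
    rw [if_pos (by rw [mem_range]; omega)]
    rw [show j1 + (p - j1) = p by omega, show p + 1 - p = 1 by omega, pow_one]
    rw [show p + 1 - j1 = (p - j1) + 1 by omega, coB]
  calc ∑ j1 ∈ range (p+1), ∑ j2 ∈ range (p+1),
        (if j1 + j2 + 1 ≤ p then
          co (p+1) j1 * co (p+1-j1) j2 * ((n+1:ℕ):ℚ)^(p+1-(j1+j2)) else 0)
      = (∑ j1 ∈ range (p+1), ∑ j2 ∈ range (p+1),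
          (if j1 + j2 ≤ p then
            co (p+1) j1 * co (p+1-j1) j2 * ((n+1:ℕ):ℚ)^(p+1-(j1+j2)) else 0))
        - ∑ j1 ∈ range (p+1), ∑ j2 ∈ range (p+1),
          (if j1 + j2 = p then
            co (p+1) j1 * co (p+1-j1) j2 * ((n+1:ℕ):ℚ)^(p+1-(j1+j2)) else 0) := by
        rw [Finset.sum_congr rfl (fun j1 h1 => Finset.sum_congr rfl (split j1 h1))]
        rw [← Finset.sum_sub_distrib]
        refine Finset.sum_congr rfl fun j1 _ => ?_
        rw [← Finset.sum_sub_distrib]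
        refine Finset.sum_congr rfl fun j2 _ => ?_
        ring
    _ = _ := by rw [corr]

lemma dR2 (p n : ℕ) : (Cpoly p [0,2]).eval ((n+1 : ℕ):ℚ)
    = (Cpoly p [0,2]).eval (n:ℚ)
      + ((Cpoly p [0]).eval ((n+1 : ℕ):ℚ) - bernoulli' p * ((n+1 : ℕ):ℚ)
          - (p:ℚ)/2 * bernoulli' (p-1) * ((n+1 : ℕ):ℚ)^2) / ((n+1 : ℕ):ℚ)^3 := by
  have hN : ((n+1 : ℕ):ℚ) ≠ 0 := by exact_mod_cast Nat.succ_ne_zero n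
  obtain _ | _ | k := p
  · rw [REP2 0 2 (n+1), REP2 0 2 n, PE1 0]
    norm_num [Finset.sum_range_one, co, bernoulli'_zero]
  · rw [REP2 1 2 (n+1), REP2 1 2 n, PE1 1]
    rw [Finset.sum_range_succ, Finset.sum_range_one,
      Finset.sum_range_succ, Finset.sum_range_one,
      Finset.sum_range_succ (f := fun j => co 2 j * ((n+1:ℕ):ℚ)^(2-j)), Finset.sum_range_one]
    norm_num [co, bernoulli'_zero, bernoulli'_one]
  · set q := k + 2 with hq
    rw [REP2 q 2 (n+1), REP2 q 2 n, PE1 q]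
    refine solve_div hN 3 ?_
    rw [← Finset.sum_sub_distrib, Finset.sum_mul]
    have lhs_eq : ∀ j ∈ range (q+1),
        (co (q+1) j * (if j + 2 ≤ q then pws (q-2-j) (n+1) else 0)
          - co (q+1) j * (if j + 2 ≤ q then pws (q-2-j) n else 0)) * ((n+1:ℕ):ℚ)^3
        = if j + 2 ≤ q then co (q+1) j * ((n+1:ℕ):ℚ)^(q+1-j) else 0 := by
      intro j _
      by_cases hc : j + 2 ≤ q
      · rw [if_pos hc, if_pos hc, if_pos hc, pws_succ]
        have e : (q - 2 - j) + 3 = q + 1 - j := by omega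
        rw [← e, pow_add]
        ring
      · rw [if_neg hc, if_neg hc, if_neg hc]
        ring
    rw [Finset.sum_congr rfl lhs_eq]
    have hq1 : q + 1 = (k + 1) + 1 + 1 := by omega
    rw [hq1]
    rw [Finset.sum_range_succ, Finset.sum_range_succ,
      Finset.sum_range_succ (f := fun j => co (q+1) j * ((n+1:ℕ):ℚ)^(q+1-j)),
      Finset.sum_range_succ (f := fun j => co (q+1) j * ((n+1:ℕ):ℚ)^(q+1-j))]
    rw [if_neg (by omega), if_neg (by omega)]
    have e1 : q + 1 - (k + 1) = 2 := by omega
    have e2 : q + 1 - (k + 1 + 1) = 1 := by omega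
    rw [e1, e2, pow_one]
    have c1 : co (q+1) (k+1+1) = bernoulli' q := by
      rw [show q + 1 = (k+1+1) + 1 by omega]
      exact coB q
    have c2 : co (q+1) (k+1) = ((k:ℚ)+2)/2 * bernoulli' (k+1) := by
      rw [show q + 1 = k + 3 by omega]
      exact co_second k
    rw [c1, c2]
    have inner : ∑ j ∈ range (k+1), (if j + 2 ≤ q then co (q+1) j * ((n+1:ℕ):ℚ)^(q+1-j) else 0)
        = ∑ j ∈ range (k+1), co (q+1) j * ((n+1:ℕ):ℚ)^(q+1-j) := by
      refine Finset.sum_congr rfl fun j hj => ?_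
      rw [mem_range] at hj
      rw [if_pos (by omega)]
    rw [inner]
    have hpq : ((q : ℕ):ℚ) = (k:ℚ) + 2 := by rw [hq]; push_cast; ring
    have hq2 : q - 1 = k + 1 := by omega
    rw [hpq, hq2]
    ring

lemma hs_single (n : ℕ) (k : ℤ) : Hs n [k] = ∑ m ∈ Finset.Icc 1 n, ((m:ℚ)^k)⁻¹ := by
  simp [Hs]

lemma hs1 (n : ℕ) : Hs (n+1) [1] = Hs n [1] + (((n+1:ℕ)):ℚ)⁻¹ := by
  rw [hs_single, hs_single, ← Finset.Ico_add_one_right_eq_Icc, ← Finset.Ico_add_one_right_eq_Icc,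
    Finset.sum_Ico_succ_top (by omega)]
  norm_num

lemma hs2 (n : ℕ) : Hs (n+1) [2] = Hs n [2] + (((n+1:ℕ):ℚ)^2)⁻¹ := by
  rw [hs_single, hs_single, ← Finset.Ico_add_one_right_eq_Icc, ← Finset.Ico_add_one_right_eq_Icc,
    Finset.sum_Ico_succ_top (by omega)]
  rw [show (2:ℤ) = ((2:ℕ):ℤ) from rfl, zpow_natCast]

lemma hsneg (p n : ℕ) : Hs n [-(p:ℤ)] = pws p n := by
  rw [hs_single]
  unfold pws
  refine Finset.sum_congr rfl fun m _ => ?_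
  rw [zpow_neg, inv_inv, zpow_natCast]

lemma eval0 (p : ℕ) (a : List ℕ) : (Cpoly p a).eval 0 = 0 := by
  unfold Cpoly
  rw [Polynomial.eval_finset_sum]
  refine Finset.sum_eq_zero fun g _ => ?_
  split_ifs with h
  · have hne : p + 1 - a.getLastD 0 - (∑ i, g i) ≠ 0 := by omega
    rw [Polynomial.eval_mul, Polynomial.eval_pow, Polynomial.eval_X, zero_pow hne, mul_zero]
  · exact Polynomial.eval_zero

lemma main (p : ℕ) (n : ℕ) :
    ∑ m ∈ Finset.Icc 1 n, (m : ℚ) ^ p * (Hs (m - 1) [1]) ^ 3 =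
      Hs n [-(p : ℤ)] * (Hs n [1]) ^ 3
        - 3 * ((Cpoly p [0, 0]).eval (n : ℚ) + bernoulli' p / 2) * (Hs n [1]) ^ 2
        + bernoulli' p / 2 * Hs n [2]
        + (6 * (Cpoly p [0, 0, 0]).eval (n : ℚ) + 3 * umbralB (Cpoly p [0]).divX
            - 3 * (Cpoly p [0, 1]).eval (n : ℚ) - (p : ℚ) / 2 * bernoulli' (p - 1)) * Hs n [1]
        - 6 * (Cpoly p [0, 0, 0, 0]).eval (n : ℚ) + 3 * (Cpoly p [0, 0, 1]).eval (n : ℚ)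
        + 3 * (Cpoly p [0, 1, 1]).eval (n : ℚ) - (Cpoly p [0, 2]).eval (n : ℚ) := by
  induction n with
  | zero =>
    have h0 : (Finset.Icc 1 0 : Finset ℕ) = ∅ := rfl
    simp [Hs, h0, eval0]
  | succ n ih =>
    rw [Finset.sum_Icc_succ_top (by omega : 1 ≤ n+1), ih]
    rw [show n+1-1 = n from rfl]
    have hA : Hs (n+1) [-(p:ℤ)] = Hs n [-(p:ℤ)] + ((n+1:ℕ):ℚ)^p := by
      rw [hsneg, hsneg, pws_succ]
    have hP1 : (Cpoly p [0]).eval ((n+1:ℕ):ℚ) = Hs n [-(p:ℤ)] + ((n+1:ℕ):ℚ)^p := by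
      rw [REP1, pws_succ, ← hsneg]
    rw [hs1, hs2, hA, d4, dQ3a, d3, dQ3b, dQ2, d2, dR2, hP1]
    have hN : (n:ℚ) + 1 ≠ 0 := by positivity
    push_cast
    field_simp
    ring


/-- Theorem 2.9.  For `p ∈ ℕ₀`, `n ∈ ℕ`:
`∑_{m=1}^{n} m^p·H_{m−1}³ = H_n(−p)·H_n³ − 3(C^{(p)}_0(n) + B_p/2)·H_n² + (B_p/2)·H_n(2)
  + (6·C^{(p)}_{0,0}(n) + 3·D^{(p)}(B) − 3·C^{(p)}_1(n) − (p/2)·B_{p−1})·H_n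
  − 6·C^{(p)}_{0,0,0}(n) + 3·C^{(p)}_{0,1}(n) + 3·C^{(p)}_{1,1}(n) − C^{(p)}_2(n)`;
the factor `(p/2)·B_{p−1}` is `0` when `p = 0` because of the factor `p`. -/
theorem stmt_12 (p : ℕ) (n : ℕ) (hn : 0 < n) :
    ∑ m ∈ Finset.Icc 1 n, (m : ℚ) ^ p * (Hs (m - 1) [1]) ^ 3 =
      Hs n [-(p : ℤ)] * (Hs n [1]) ^ 3
        - 3 * ((Cpoly p [0, 0]).eval (n : ℚ) + bernoulli' p / 2) * (Hs n [1]) ^ 2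
        + bernoulli' p / 2 * Hs n [2]
        + (6 * (Cpoly p [0, 0, 0]).eval (n : ℚ) + 3 * umbralB (Cpoly p [0]).divX
            - 3 * (Cpoly p [0, 1]).eval (n : ℚ) - (p : ℚ) / 2 * bernoulli' (p - 1)) * Hs n [1]
        - 6 * (Cpoly p [0, 0, 0, 0]).eval (n : ℚ) + 3 * (Cpoly p [0, 0, 1]).eval (n : ℚ)
        + 3 * (Cpoly p [0, 1, 1]).eval (n : ℚ) - (Cpoly p [0, 2]).eval (n : ℚ) := by
  exact main p n
end
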